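/- Let n ≥ 3 be odd and let C_n be the cycle graph on n vertices. Then the discrete Borsuk number of C_n equals 3, i.e., b(C_n) = 3. -/

import Mathlib

open SimpleGraph

variable {V : Type*}

/-- A *Borsuk partition* of a finite simple graph `G` is a partition of its vertex set into
(nonempty) parts such that the subgraph induced on each part has (extended) diameter strictly
smaller than the (extended) diameter of `G`. -/
def IsBorsukPartition [Fintype V] [DecidableEq V] (G : SimpleGraph V)
    (P : Finpartition (Finset.univ : Finset V)) : Prop :=
  ∀ s ∈ P.parts, (G.induce (s : Set V)).ediam < G.ediam

/-- The *discrete Borsuk number* of a finite simple graph `G`: the minimum number of parts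
of a Borsuk partition of `G`. -/
noncomputable def borsukNumber [Fintype V] [DecidableEq V] (G : SimpleGraph V) : ℕ :=
  sInf {n | ∃ P : Finpartition (Finset.univ : Finset V),
    IsBorsukPartition G P ∧ P.parts.card = n}

/-!
For odd `n = 2m + 1` the cycle has diameter `m`. Cutting it into consecutive arcs of `m`, `m`
and `1` vertices gives three parts of diameter at most `m - 1`. Conversely, a part of induced
diameter below `m` cannot contain an antipodal pair `u, u + m`, whose distance is already `m` in
the cycle; so the part `s` is disjoint from its translate `s + m` and has at most `m` vertices,
and two such parts cannot cover all `2m + 1` vertices.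
-/

namespace SimpleGraph

variable {W : Type*} {G : SimpleGraph V} {H : SimpleGraph W}

lemma Hom.edist_le (f : G →g H) (u v : V) : H.edist (f u) (f v) ≤ G.edist u v := by
  rcases eq_or_ne (G.edist u v) ⊤ with h | h
  · simp [h]
  · obtain ⟨p, hp⟩ := exists_walk_of_edist_ne_top h
    rw [← hp, ← p.length_map f]
    exact SimpleGraph.edist_le _

lemma edist_le_ediam_induce {s : Set V} {u v : V} (hu : u ∈ s) (hv : v ∈ s) :
    G.edist u v ≤ (G.induce s).ediam :=
  ((Embedding.induce s).toHom.edist_le ⟨u, hu⟩ ⟨v, hv⟩).trans edist_le_ediam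

lemma Walk.le_add_length {f : V → ℕ} (hf : ∀ ⦃x y⦄, G.Adj x y → f y ≤ f x + 1) {u v : V}
    (p : G.Walk u v) : f v ≤ f u + p.length := by
  induction p with
  | nil => simp
  | cons h _ ih =>
    have := hf h
    rw [length_cons]
    omega

lemma le_add_edist {f : V → ℕ} (hf : ∀ ⦃x y⦄, G.Adj x y → f y ≤ f x + 1) (u v : V) :
    (f v : ℕ∞) ≤ f u + G.edist u v := by
  rcases eq_or_ne (G.edist u v) ⊤ with h | h
  · simp [h]
  · obtain ⟨p, hp⟩ := exists_walk_of_edist_ne_top h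
    rw [← hp]
    exact_mod_cast p.le_add_length hf

section Fin

variable {n : ℕ}

lemma edist_induce_le_of_ordConnected {G : SimpleGraph (Fin n)} (hG : pathGraph n ≤ G)
    {s : Set (Fin n)} (hs : s.OrdConnected) {x y : s} (hxy : x.1 ≤ y.1) :
    (G.induce s).edist x y ≤ (y.1.val - x.1.val : ℕ) := by
  obtain ⟨k, hk⟩ := Nat.exists_eq_add_of_le (Fin.le_def.mp hxy)
  rw [hk, Nat.add_sub_cancel_left]
  clear hxy
  induction k generalizing x with
  | zero => simp [show x = y from Subtype.ext (Fin.ext hk.symm)]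
  | succ k ih =>
    have hlt : x.1.val + 1 < n := by have := y.1.isLt; omega
    have hmem : (⟨x.1.val + 1, hlt⟩ : Fin n) ∈ s :=
      hs.out x.2 y.2 ⟨Fin.le_def.mpr (by simp), Fin.le_def.mpr (by simp only; omega)⟩
    let x' : s := ⟨_, hmem⟩
    have hadj : (G.induce s).Adj x x' := hG (pathGraph_adj.mpr (Or.inl rfl))
    calc (G.induce s).edist x y ≤ (G.induce s).edist x x' + (G.induce s).edist x' y :=
          SimpleGraph.edist_triangle
      _ ≤ 1 + k :=
          add_le_add (edist_eq_one_iff_adj.mpr hadj).le (ih (x := x') (by simp [x']; omega))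
      _ = (k + 1 : ℕ) := by push_cast; ring

lemma ediam_induce_le_of_ordConnected {G : SimpleGraph (Fin n)} (hG : pathGraph n ≤ G)
    {s : Set (Fin n)} (hs : s.OrdConnected) {k : ℕ} (hk : ∀ x ∈ s, ∀ y ∈ s, y.val ≤ x.val + k) :
    (G.induce s).ediam ≤ k := by
  refine ediam_le_of_edist_le fun x y ↦ ?_
  rcases le_total x.1 y.1 with hxy | hxy
  · have := hk _ x.2 _ y.2
    exact (edist_induce_le_of_ordConnected hG hs hxy).trans (by norm_cast; omega)
  · have := hk _ y.2 _ x.2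
    rw [edist_comm]
    exact (edist_induce_le_of_ordConnected hG hs hxy).trans (by norm_cast; omega)

lemma edist_le_of_pathGraph_le {G : SimpleGraph (Fin n)} (hG : pathGraph n ≤ G) {x y : Fin n}
    (hxy : x ≤ y) : G.edist x y ≤ (y.val - x.val : ℕ) :=
  ((Embedding.induce Set.univ).toHom.edist_le ⟨x, trivial⟩ ⟨y, trivial⟩).trans
    (edist_induce_le_of_ordConnected hG Set.ordConnected_univ hxy)

lemma cycleGraph_adj_val {x y : Fin n} (h : (cycleGraph n).Adj x y) :
    x.val + 1 = y.val ∨ y.val + 1 = x.val ∨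
      (x.val = 0 ∧ y.val + 1 = n) ∨ (y.val = 0 ∧ x.val + 1 = n) := by
  have := x.isLt
  have := y.isLt
  rw [cycleGraph_adj'] at h
  rcases lt_trichotomy x y with hxy | rfl | hyx
  · rw [Fin.coe_sub_iff_lt.mpr hxy, Fin.coe_sub_iff_le.mpr hxy.le] at h
    omega
  · rw [Fin.coe_sub_iff_le.mpr le_rfl] at h
    omega
  · rw [Fin.coe_sub_iff_le.mpr hyx.le, Fin.coe_sub_iff_lt.mpr hyx] at h
    omega

lemma min_val_le_edist_cycleGraph [NeZero n] (u a : Fin n) :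
    (min a.val (n - a.val) : ℕ) ≤ (cycleGraph n).edist u (u + a) := by
  let translate : cycleGraph n →g cycleGraph n :=
    ⟨(· - u), fun h ↦ by rwa [cycleGraph_adj', sub_sub_sub_cancel_right, sub_sub_sub_cancel_right,
      ← cycleGraph_adj']⟩
  have hlip : ∀ ⦃x y : Fin n⦄, (cycleGraph n).Adj x y →
      min y.val (n - y.val) ≤ min x.val (n - x.val) + 1 := fun x y h ↦ by
    have := cycleGraph_adj_val h
    omega
  calc ((min a.val (n - a.val) : ℕ) : ℕ∞)
      ≤ (min (0 : Fin n).val (n - (0 : Fin n).val) : ℕ) + (cycleGraph n).edist 0 a :=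
        le_add_edist hlip 0 a
    _ = (cycleGraph n).edist (u - u) (u + a - u) := by simp
    _ ≤ (cycleGraph n).edist u (u + a) := translate.edist_le u (u + a)

lemma edist_cycleGraph_le (u v : Fin n) : (cycleGraph n).edist u v ≤ (n / 2 : ℕ) := by
  wlog huv : u ≤ v generalizing u v
  · rw [edist_comm]
    exact this v u (le_of_not_ge huv)
  rw [Fin.le_def] at huv
  by_cases hshort : v.val - u.val ≤ n / 2
  · exact (edist_le_of_pathGraph_le pathGraph_le_cycleGraph huv).trans (by exact_mod_cast hshort)
  have := v.isLt
  let first : Fin n := ⟨0, by omega⟩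
  let last : Fin n := ⟨n - 1, by omega⟩
  have hwrap : (cycleGraph n).Adj first last := by
    rw [cycleGraph_adj']
    left
    rw [Fin.coe_sub_iff_lt.mpr (Fin.lt_def.mpr (by simp [first, last]; omega))]
    simp [first, last]
    omega
  calc (cycleGraph n).edist u v
      ≤ (cycleGraph n).edist u last + (cycleGraph n).edist last v := SimpleGraph.edist_triangle
    _ ≤ (cycleGraph n).edist u first + (cycleGraph n).edist first last +
        (cycleGraph n).edist last v := by gcongr; exact SimpleGraph.edist_triangle
    _ ≤ (u.val - 0 : ℕ) + 1 + ((n - 1) - v.val : ℕ) := by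
        gcongr
        · rw [edist_comm]
          exact edist_le_of_pathGraph_le pathGraph_le_cycleGraph (Fin.le_def.mpr (Nat.zero_le _))
        · exact (edist_eq_one_iff_adj.mpr hwrap).le
        · rw [edist_comm]
          exact edist_le_of_pathGraph_le (y := last) pathGraph_le_cycleGraph
            (Fin.le_def.mpr (by simp only [last]; omega))
    _ ≤ (n / 2 : ℕ) := by norm_cast; omega

lemma ediam_cycleGraph : (cycleGraph n).ediam = (n / 2 : ℕ) := by
  refine le_antisymm (ediam_le_of_edist_le edist_cycleGraph_le) ?_
  rcases Nat.eq_zero_or_pos n with rfl | hn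
  · simp
  have : NeZero n := ⟨hn.ne'⟩
  calc ((n / 2 : ℕ) : ℕ∞) = (min (n / 2) (n - n / 2) : ℕ) := by congr 1; omega
    _ ≤ (cycleGraph n).edist 0 (0 + ⟨n / 2, by omega⟩) := min_val_le_edist_cycleGraph _ _
    _ ≤ (cycleGraph n).ediam := edist_le_ediam

end Fin

end SimpleGraph

open Finset

lemma Finset.exists_add_mem_of_card_lt {A : Type*} [AddGroup A] [Fintype A] [DecidableEq A]
    {s : Finset A} (hs : Fintype.card A < 2 * #s) (a : A) : ∃ u ∈ s, u + a ∈ s := by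
  obtain ⟨u, hu⟩ := inter_nonempty_of_card_lt_card_add_card (subset_univ s)
    (subset_univ (s.image (· - a)))
    (by rwa [card_image_of_injective _ sub_left_injective, card_univ, ← two_mul])
  rw [mem_inter, mem_image] at hu
  obtain ⟨hu, v, hv, rfl⟩ := hu
  exact ⟨v - a, hu, by simpa⟩

instance Setoid.decidableRelKer {α β : Type*} [DecidableEq β] (f : α → β) :
    DecidableRel (Setoid.ker f) :=
  fun a b ↦ decidable_of_iff (f a = f b) Setoid.ker_def.symm

section Borsuk

variable [Fintype V] [DecidableEq V] {G : SimpleGraph V}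

lemma borsukNumber_eq_of_isBorsukPartition {P : Finpartition (univ : Finset V)} {k : ℕ}
    (hP : IsBorsukPartition G P) (hPk : #P.parts ≤ k)
    (hk : ∀ Q, IsBorsukPartition G Q → k ≤ #Q.parts) : borsukNumber G = k := by
  unfold borsukNumber
  refine le_antisymm ((Nat.sInf_le ?_).trans hPk) (le_csInf ⟨_, P, hP, rfl⟩ ?_)
  · exact ⟨P, hP, rfl⟩
  · rintro _ ⟨Q, hQ, rfl⟩
    exact hk Q hQ

lemma IsBorsukPartition.card_le_card_parts_mul {P : Finpartition (univ : Finset V)}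
    (hP : IsBorsukPartition G P) {c : ℕ}
    (hc : ∀ s : Finset V, (G.induce (s : Set V)).ediam < G.ediam → #s ≤ c) :
    Fintype.card V ≤ #P.parts * c := by
  rw [← card_univ, ← P.sum_card_parts]
  simpa using sum_le_card_nsmul P.parts card c fun s hs ↦ hc s (hP s hs)

variable {ι : Type*}

lemma isBorsukPartition_ofSetoid_ker {f : V → ι} [DecidableRel (Setoid.ker f)]
    (hf : ∀ v, (G.induce {w | f v = f w}).ediam < G.ediam) :
    IsBorsukPartition G (Finpartition.ofSetoid (Setoid.ker f)) := by
  intro s hs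
  obtain ⟨v, -, rfl⟩ := mem_image.mp hs
  rw [coe_filter_univ]
  exact hf v

lemma card_parts_ofSetoid_ker_le [DecidableEq ι] (f : V → ι) [DecidableRel (Setoid.ker f)] :
    #(Finpartition.ofSetoid (Setoid.ker f)).parts ≤ #(univ.image f) := by
  refine card_le_card_of_surjOn (fun i ↦ ({b | i = f b} : Finset V)) ?_
  rintro _ hs
  obtain ⟨a, -, rfl⟩ := mem_image.mp hs
  exact ⟨f a, mem_image_of_mem f (mem_univ a), by ext; simp [Setoid.ker_def]⟩

end Borsuk

namespace SimpleGraph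

variable {n : ℕ}

lemma card_le_of_ediam_induce_lt_cycleGraph {m : ℕ} {s : Finset (Fin (2 * m + 1))}
    (hs : ((cycleGraph (2 * m + 1)).induce (s : Set (Fin (2 * m + 1)))).ediam <
      (cycleGraph (2 * m + 1)).ediam) : #s ≤ m := by
  by_contra! hcard
  obtain ⟨u, hu, hua⟩ := exists_add_mem_of_card_lt (s := s) (by rw [Fintype.card_fin]; omega)
    (⟨m, by omega⟩ : Fin (2 * m + 1))
  have hfar := (min_val_le_edist_cycleGraph u _).trans (edist_le_ediam_induce hu hua)
  rw [ediam_cycleGraph] at hs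
  rw [show min m (2 * m + 1 - m) = (2 * m + 1) / 2 by omega] at hfar
  exact hfar.not_gt hs

lemma three_le_card_parts_of_isBorsukPartition_cycleGraph (hodd : Odd n)
    {P : Finpartition (univ : Finset (Fin n))} (hP : IsBorsukPartition (cycleGraph n) P) :
    3 ≤ #P.parts := by
  obtain ⟨m, rfl⟩ := hodd
  have hcover := hP.card_le_card_parts_mul fun _ ↦ card_le_of_ediam_induce_lt_cycleGraph
  rw [Fintype.card_fin] at hcover
  by_contra! h
  have := Nat.mul_le_mul_right m (Nat.le_of_lt_succ h)
  omega

def cycleArcPartition (n : ℕ) : Finpartition (univ : Finset (Fin n)) :=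
  Finpartition.ofSetoid (Setoid.ker fun x : Fin n ↦ x.val / (n / 2))

lemma isBorsukPartition_cycleArcPartition (hn : 2 ≤ n) :
    IsBorsukPartition (cycleGraph n) (cycleArcPartition n) := by
  have hpos : 0 < n / 2 := by omega
  refine isBorsukPartition_ofSetoid_ker (f := fun x : Fin n ↦ x.val / (n / 2)) fun v ↦ ?_
  have hfiber : ((cycleGraph n).induce {w : Fin n | v.val / (n / 2) = w.val / (n / 2)}).ediam ≤
      (n / 2 - 1 : ℕ) := by
    refine ediam_induce_le_of_ordConnected pathGraph_le_cycleGraph ⟨fun x hx y hy z hz ↦ ?_⟩ ?_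
    · exact le_antisymm (hx.trans_le (Nat.div_le_div_right hz.1))
        ((Nat.div_le_div_right hz.2).trans hy.ge)
    · intro x hx y hy
      have hlo := Nat.div_mul_le_self x.val (n / 2)
      have hhi := Nat.lt_div_mul_add (a := y.val) hpos
      simp only [Set.mem_ofPred_eq] at hx hy
      rw [← hy, hx] at hhi
      omega
  refine hfiber.trans_lt ?_
  rw [ediam_cycleGraph]
  exact_mod_cast (by omega : n / 2 - 1 < n / 2)

lemma card_parts_cycleArcPartition_le (hn : 2 ≤ n) : #(cycleArcPartition n).parts ≤ 3 := by
  refine (card_parts_ofSetoid_ker_le fun x : Fin n ↦ x.val / (n / 2)).trans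
    ((card_le_card ?_).trans (card_range 3).le)
  intro i hi
  obtain ⟨x, -, rfl⟩ := mem_image.mp hi
  rw [mem_range, Nat.div_lt_iff_lt_mul (by omega)]
  omega

end SimpleGraph

/-- For odd `n ≥ 3`, the discrete Borsuk number of the cycle graph on `n` vertices is `3`. -/
theorem borsukNumber_cycleGraph_odd (n : ℕ) (hn : 3 ≤ n) (hodd : Odd n) :
    borsukNumber (cycleGraph n) = 3 :=
  borsukNumber_eq_of_isBorsukPartition (isBorsukPartition_cycleArcPartition (by omega))
    (card_parts_cycleArcPartition_le (by omega))
    fun _ hQ ↦ three_le_card_parts_of_isBorsukPartition_cycleGraph hodd hQ
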